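/- For finite metric measure spaces (X, d_X, μ_X) and (Y, d_Y, μ_Y), where μ_X and μ_Y are probability mass functions, GW((X, d_X, μ_X), (Y, d_Y, μ_Y)) = 0 if and only if there exists a bijection φ from the support of μ_X (the set of x with μ_X(x) > 0) to the support of μ_Y such that d_Y(φ(x), φ(x')) = d_X(x, x') for all x, x' in the support of μ_X, and μ_Y(φ(x)) = μ_X(x) for all x in the support of μ_X. -/

import Mathlib

open Finset

/-- `d : X × X → ℝ` is a metric on `X`. -/
def IsMetric {X : Type*} (d : X × X → ℝ) : Prop :=
  (∀ x y, d (x, y) = 0 ↔ x = y) ∧ (∀ x y, d (x, y) = d (y, x)) ∧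
    (∀ x y z, d (x, z) ≤ d (x, y) + d (y, z))

/-- The set of couplings between two finite measures. -/
def couplings {X Y : Type*} [Fintype X] [Fintype Y]
    (μX : X → NNReal) (μY : Y → NNReal) : Set (X × Y → NNReal) :=
  {u | (∀ x, ∑ y, u (x, y) = μX x) ∧ (∀ y, ∑ x, u (x, y) = μY y)}

/-- The Gromov-Wasserstein objective of a coupling `u`. -/
noncomputable def GWobj {X Y : Type*} [Fintype X] [Fintype Y]
    (dX : X × X → ℝ) (dY : Y × Y → ℝ) (u : X × Y → NNReal) : ℝ :=
  ∑ x, ∑ x', ∑ y, ∑ y',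
    |dX (x, x') - dY (y, y')| ^ 2 * (u (x, y) : ℝ) * (u (x', y') : ℝ)

/-- The squared Gromov-Wasserstein distance between finite metric measure spaces. -/
noncomputable def GWsq {X Y : Type*} [Fintype X] [Fintype Y]
    (dX : X × X → ℝ) (μX : X → NNReal) (dY : Y × Y → ℝ) (μY : Y → NNReal) : ℝ :=
  sInf (GWobj dX dY '' couplings μX μY)

/-- The Gromov-Wasserstein distance between finite metric measure spaces. -/
noncomputable def GW {X Y : Type*} [Fintype X] [Fintype Y]
    (dX : X × X → ℝ) (μX : X → NNReal) (dY : Y × Y → ℝ) (μY : Y → NNReal) : ℝ :=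
  Real.sqrt (GWsq dX μX dY μY)

/-! The infimum defining `GWsq` is attained: the couplings form a compact set and the objective
is continuous. A coupling of zero cost only charges pairs `(x, y)`, `(x', y')` with
`dX (x, x') = dY (y, y')`; taking `x = x'` (or `y = y'`) and using that distinct points are at
positive distance, its support is the graph of a bijection between the supports of `μX` and
`μY`, which is then isometric and, by the marginal conditions, measure preserving. Conversely,
the coupling concentrated on the graph of such a bijection has zero cost. -/

section Couplings

variable {X Y : Type*} [Fintype X] [Fintype Y] {μX : X → NNReal} {μY : Y → NNReal}
  {u : X × Y → NNReal}

theorem prod_mem_couplings (hμX : ∑ x, μX x = 1) (hμY : ∑ y, μY y = 1) :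
    (fun p : X × Y => μX p.1 * μY p.2) ∈ couplings μX μY :=
  ⟨fun x => by simp [← mul_sum, hμY], fun y => by simp [← sum_mul, hμX]⟩

theorem coupling_apply_le_left (hu : u ∈ couplings μX μY) (x : X) (y : Y) : u (x, y) ≤ μX x :=
  hu.1 x ▸ single_le_sum (f := fun y => u (x, y)) (fun _ _ => zero_le) (mem_univ y)

theorem coupling_apply_le_right (hu : u ∈ couplings μX μY) (x : X) (y : Y) : u (x, y) ≤ μY y :=
  hu.2 y ▸ single_le_sum (f := fun x => u (x, y)) (fun _ _ => zero_le) (mem_univ x)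

theorem exists_coupling_apply_ne_zero_left (hu : u ∈ couplings μX μY) {x : X} (hx : 0 < μX x) :
    ∃ y, u (x, y) ≠ 0 := by
  obtain ⟨y, -, hy⟩ := exists_ne_zero_of_sum_ne_zero (hu.1 x ▸ hx.ne')
  exact ⟨y, hy⟩

theorem exists_coupling_apply_ne_zero_right (hu : u ∈ couplings μX μY) {y : Y} (hy : 0 < μY y) :
    ∃ x, u (x, y) ≠ 0 := by
  obtain ⟨x, -, hx⟩ := exists_ne_zero_of_sum_ne_zero (hu.2 y ▸ hy.ne')
  exact ⟨x, hx⟩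

theorem coupling_apply_eq_left (hu : u ∈ couplings μX μY) {x : X} {y : Y}
    (hy : ∀ y', u (x, y') ≠ 0 → y' = y) : u (x, y) = μX x := by
  rw [← hu.1 x, sum_eq_single y (fun y' _ hy' => not_imp_comm.1 (hy y') hy') (by simp)]

theorem coupling_apply_eq_right (hu : u ∈ couplings μX μY) {x : X} {y : Y}
    (hx : ∀ x', u (x', y) ≠ 0 → x' = x) : u (x, y) = μY y := by
  rw [← hu.2 y, sum_eq_single x (fun x' _ hx' => not_imp_comm.1 (hx x') hx') (by simp)]

theorem isCompact_couplings (μX : X → NNReal) (μY : Y → NNReal) :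
    IsCompact (couplings μX μY) := by
  have hclosed : IsClosed (couplings μX μY) := by
    simp only [couplings, Set.ofPred_and, Set.ofPred_forall]
    exact .inter (isClosed_iInter fun x => isClosed_eq (by fun_prop) continuous_const)
      (isClosed_iInter fun y => isClosed_eq (by fun_prop) continuous_const)
  have hbox : IsCompact (Set.univ.pi fun p : X × Y => Set.Icc 0 (μX p.1)) :=
    isCompact_univ_pi fun _ => isCompact_Icc
  exact hbox.of_isClosed_subset hclosed fun u hu p _ =>
    ⟨zero_le, coupling_apply_le_left hu p.1 p.2⟩

theorem exists_bijective_of_coupling_support (hu : u ∈ couplings μX μY)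
    (hfun : ∀ x y y', u (x, y) ≠ 0 → u (x, y') ≠ 0 → y = y')
    (hinj : ∀ x x' y, u (x, y) ≠ 0 → u (x', y) ≠ 0 → x = x') :
    ∃ φ : {x : X // 0 < μX x} → {y : Y // 0 < μY y}, Function.Bijective φ ∧
      (∀ x, u (x.1, (φ x).1) ≠ 0) ∧ ∀ x, μY (φ x) = μX x := by
  choose f hf using fun x : {x : X // 0 < μX x} => exists_coupling_apply_ne_zero_left hu x.2
  have hfY (x) : 0 < μY (f x) :=
    (pos_iff_ne_zero.2 (hf x)).trans_le (coupling_apply_le_right hu _ _)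
  refine ⟨fun x => ⟨f x, hfY x⟩, ⟨fun x x' hxx' => ?_, fun y => ?_⟩, hf, fun x => ?_⟩
  · have hfx : f x = f x' := congrArg Subtype.val hxx'
    exact Subtype.ext (hinj _ _ _ (hf x) (hfx ▸ hf x'))
  · obtain ⟨x, hx⟩ := exists_coupling_apply_ne_zero_right hu y.2
    have hxX : 0 < μX x := (pos_iff_ne_zero.2 hx).trans_le (coupling_apply_le_left hu _ _)
    exact ⟨⟨x, hxX⟩, Subtype.ext (hfun _ _ _ (hf _) hx)⟩
  · rw [← coupling_apply_eq_right hu fun x' hx' => hinj _ _ _ hx' (hf x),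
      coupling_apply_eq_left hu fun y' hy' => hfun _ _ _ hy' (hf x)]

end Couplings

section GraphCoupling

variable {X Y : Type*} [Fintype X] {μX : X → NNReal} {μY : Y → NNReal}

open Classical in
theorem sum_support_ite_eq (μ : X → NNReal) (x : X) :
    ∑ s : {x : X // 0 < μ x}, (if (s : X) = x then μ s else 0) = μ x := by
  by_cases hx : 0 < μ x
  · simp_rw [show ∀ s : {x : X // 0 < μ x}, (s : X) = x ↔ s = ⟨x, hx⟩ from
      fun s => by rw [Subtype.ext_iff]]
    simp
  · refine (sum_eq_zero fun s _ => ?_).trans (nonpos_iff_eq_zero.1 (not_lt.1 hx)).symm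
    split_ifs with h
    · exact absurd (h ▸ s.2) hx
    · rfl

open Classical in
noncomputable def graphCoupling (φ : {x : X // 0 < μX x} → {y : Y // 0 < μY y}) :
    X × Y → NNReal :=
  fun p => ∑ s : {x : X // 0 < μX x}, if (s.1, (φ s).1) = p then μX s else 0

theorem exists_eq_of_graphCoupling_ne_zero {φ : {x : X // 0 < μX x} → {y : Y // 0 < μY y}}
    {x : X} {y : Y} (h : graphCoupling φ (x, y) ≠ 0) : ∃ s, s.1 = x ∧ (φ s).1 = y := by
  obtain ⟨s, -, hs⟩ := exists_ne_zero_of_sum_ne_zero h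
  exact ⟨s, Prod.mk.inj (of_not_not fun h => hs (if_neg h))⟩

theorem graphCoupling_mem_couplings [Fintype Y] {φ : {x : X // 0 < μX x} → {y : Y // 0 < μY y}}
    (hφ : Function.Bijective φ) (hμ : ∀ x, μY (φ x) = μX x) :
    graphCoupling φ ∈ couplings μX μY := by
  classical
  refine ⟨fun x => ?_, fun y => ?_⟩
  · calc ∑ y, graphCoupling φ (x, y)
        = ∑ s : {x : X // 0 < μX x}, if (s : X) = x then μX s else 0 := by
          simp only [graphCoupling, Prod.mk.injEq, ite_and]
          rw [sum_comm]
          simp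
      _ = μX x := sum_support_ite_eq μX x
  · calc ∑ x, graphCoupling φ (x, y)
        = ∑ s : {x : X // 0 < μX x}, if (φ s : Y) = y then μY (φ s) else 0 := by
          simp only [graphCoupling, Prod.mk.injEq, ite_and, hμ]
          rw [sum_comm]
          simp
      _ = ∑ t : {y : Y // 0 < μY y}, if (t : Y) = y then μY t else 0 :=
          hφ.sum_comp fun t => if (t : Y) = y then μY t else 0
      _ = μY y := sum_support_ite_eq μY y

end GraphCoupling

section GromovWasserstein

variable {X Y : Type*} [Fintype X] [Fintype Y] {dX : X × X → ℝ} {dY : Y × Y → ℝ}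
  {μX : X → NNReal} {μY : Y → NNReal}

theorem GWobj_nonneg (u : X × Y → NNReal) : 0 ≤ GWobj dX dY u := by
  unfold GWobj; positivity

theorem continuous_GWobj : Continuous (GWobj dX dY) := by
  unfold GWobj; fun_prop

theorem GWobj_eq_zero_iff {u : X × Y → NNReal} : GWobj dX dY u = 0 ↔
    ∀ x x' y y', u (x, y) ≠ 0 → u (x', y') ≠ 0 → dX (x, x') = dY (y, y') := by
  have hterm (x x' y y') :
      |dX (x, x') - dY (y, y')| ^ 2 * (u (x, y) : ℝ) * (u (x', y') : ℝ) = 0 ↔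
        (u (x, y) ≠ 0 → u (x', y') ≠ 0 → dX (x, x') = dY (y, y')) := by
    simp only [mul_eq_zero, pow_eq_zero_iff two_ne_zero, abs_eq_zero, sub_eq_zero,
      NNReal.coe_eq_zero]
    tauto
  simp (disch := intros; positivity) only [GWobj, sum_eq_zero_iff_of_nonneg, mem_univ,
    true_imp_iff, hterm]

theorem GWsq_nonneg : 0 ≤ GWsq dX μX dY μY :=
  Real.sInf_nonneg <| by rintro _ ⟨u, -, rfl⟩; exact GWobj_nonneg u

theorem GW_eq_zero_iff_GWsq_eq_zero : GW dX μX dY μY = 0 ↔ GWsq dX μX dY μY = 0 :=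
  Real.sqrt_eq_zero GWsq_nonneg

theorem GWsq_eq_zero_iff_exists (hne : (couplings μX μY).Nonempty) :
    GWsq dX μX dY μY = 0 ↔ ∃ u ∈ couplings μX μY, GWobj dX dY u = 0 := by
  constructor
  · intro h
    obtain ⟨u, hu, hmin⟩ := (isCompact_couplings μX μY).exists_isMinOn hne
      continuous_GWobj.continuousOn
    have hleast : IsLeast (GWobj dX dY '' couplings μX μY) (GWobj dX dY u) :=
      ⟨⟨u, hu, rfl⟩, by rintro _ ⟨v, hv, rfl⟩; exact hmin hv⟩
    exact ⟨u, hu, hleast.csInf_eq.symm.trans h⟩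
  · rintro ⟨u, hu, hu0⟩
    exact IsLeast.csInf_eq ⟨⟨u, hu, hu0⟩, by rintro _ ⟨v, -, rfl⟩; exact GWobj_nonneg v⟩

theorem GWobj_graphCoupling_eq_zero {φ : {x : X // 0 < μX x} → {y : Y // 0 < μY y}}
    (hφ : ∀ x x', dY ((φ x).1, (φ x').1) = dX (x.1, x'.1)) :
    GWobj dX dY (graphCoupling φ) = 0 := by
  refine GWobj_eq_zero_iff.2 fun x x' y y' h h' => ?_
  obtain ⟨s, rfl, rfl⟩ := exists_eq_of_graphCoupling_ne_zero h
  obtain ⟨s', rfl, rfl⟩ := exists_eq_of_graphCoupling_ne_zero h'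
  exact (hφ s s').symm

end GromovWasserstein

/-- `GW = 0` iff there is a measure-preserving isometric bijection between the supports. -/
theorem GW_eq_zero_iff_isometry {X Y : Type*} [Fintype X] [Fintype Y]
    (dX : X × X → ℝ) (μX : X → NNReal) (dY : Y × Y → ℝ) (μY : Y → NNReal)
    (hdX : IsMetric dX) (hdY : IsMetric dY)
    (hμX : ∑ x, μX x = 1) (hμY : ∑ y, μY y = 1) :
    GW dX μX dY μY = 0 ↔
      ∃ φ : {x : X // 0 < μX x} → {y : Y // 0 < μY y},
        Function.Bijective φ ∧
        (∀ x x' : {x : X // 0 < μX x},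
          dY ((φ x : Y), (φ x' : Y)) = dX ((x : X), (x' : X))) ∧
        (∀ x : {x : X // 0 < μX x}, μY (φ x : Y) = μX (x : X)) := by
  rw [GW_eq_zero_iff_GWsq_eq_zero, GWsq_eq_zero_iff_exists ⟨_, prod_mem_couplings hμX hμY⟩]
  constructor
  · rintro ⟨u, hu, hu0⟩
    rw [GWobj_eq_zero_iff] at hu0
    have hfun (x y y') (h : u (x, y) ≠ 0) (h' : u (x, y') ≠ 0) : y = y' :=
      (hdY.1 y y').1 (by rw [← hu0 x x y y' h h', (hdX.1 x x).2 rfl])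
    have hinj (x x' y) (h : u (x, y) ≠ 0) (h' : u (x', y) ≠ 0) : x = x' :=
      (hdX.1 x x').1 (by rw [hu0 x x' y y h h', (hdY.1 y y).2 rfl])
    obtain ⟨φ, hφ, hsupp, hμ⟩ := exists_bijective_of_coupling_support hu hfun hinj
    exact ⟨φ, hφ, fun x x' => (hu0 _ _ _ _ (hsupp x) (hsupp x')).symm, hμ⟩
  · rintro ⟨φ, hφ, hiso, hμ⟩
    exact ⟨graphCoupling φ, graphCoupling_mem_couplings hφ hμ, GWobj_graphCoupling_eq_zero hiso⟩
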